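/- arXiv:1911.08978 — 5 statements merged into one kernel-verified Lean document; each statement's English description precedes it below -/
import Mathlib

section
/- Let ε ∈ (0,1] and κ₀ > 0 small enough. For ξ ∈ ℝ³ with ε|ξ|² ≤ 2κ₀, the Hessian determinant of b satisfies det(∇²b(ξ)) = ((1−2ε²|ξ|²)/b(ξ))³ · (1−6ε²|ξ|²−3ε²|ξ|⁴+2ε⁴|ξ|⁶)/(b(ξ)²(1−2ε²|ξ|²)), where b(ξ) = √(1+|ξ|²−ε²|ξ|⁴). In particular, if moreover |ξ| ≤ 2, then det(∇²b(ξ)) ≥ 1/(2⁴ · 5²) uniformly in ε ∈ (0,1]. -/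
/-!
For a radial function `f x = φ (‖x‖²)` the Hessian at `ξ` is `2 φ'(t) I + 4 φ''(t) ξ ξᵀ` with
`t = ‖ξ‖²`, so by the matrix determinant lemma its determinant is `(2 φ'(t))ⁿ (1 + 2 φ''(t) t / φ'(t))`.
For `φ s = √(1 + s - ε² s²)` the second factor becomes the stated quotient once `b² = 1 + t - ε² t²`
is substituted. On the region `ε t ≤ 2 κ₀` one has `ε² t ≤ 2 ε κ₀` and `ε² t² ≤ 4 κ₀²`, which give
`1 - 2 ε² t ≥ 5/6` and a numerator `≥ 1/2`; with `b² ≤ 5` for `‖ξ‖ ≤ 2` the determinant is at least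
`(5/6)² (1/2) / 75 ≥ 1/400`.
-/

open scoped RealInnerProductSpace Topology

theorem Matrix.det_smul_one_add_vecMulVec {n K : Type*} [Fintype n] [DecidableEq n] [Field K]
    {a : K} (ha : a ≠ 0) (u v : n → K) :
    (a • (1 : Matrix n n K) + vecMulVec u v).det = a ^ Fintype.card n * (1 + v ⬝ᵥ u / a) := by
  have h : a • (1 : Matrix n n K) + vecMulVec u v = a • (1 + vecMulVec (a⁻¹ • u) v) := by
    rw [smul_add, ← smul_vecMulVec, smul_inv_smul₀ ha]
  rw [h, det_smul, vecMulVec_eq Unit, det_one_add_replicateCol_mul_replicateRow, dotProduct_smul,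
    smul_eq_mul, inv_mul_eq_div]

section Radial

variable {E : Type*} [NormedAddCommGroup E] [InnerProductSpace ℝ E] {φ φ' : ℝ → ℝ}

theorem hasFDerivAt_comp_norm_sq {y : E} (h : HasDerivAt φ (φ' (‖y‖ ^ 2)) (‖y‖ ^ 2)) :
    HasFDerivAt (fun x : E => φ (‖x‖ ^ 2)) ((2 * φ' (‖y‖ ^ 2)) • innerSL ℝ y) y := by
  refine (h.comp_hasFDerivAt y (hasStrictFDerivAt_norm_sq y).hasFDerivAt).congr_fderiv ?_
  ext w
  simp only [smul_apply, coe_innerSL_apply, nsmul_eq_mul, Nat.cast_ofNat, smul_eq_mul]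
  ring

theorem fderiv_fderiv_comp_norm_sq_apply {φ'' : ℝ} {ξ : E}
    (hφ : ∀ᶠ s in 𝓝 (‖ξ‖ ^ 2), HasDerivAt φ (φ' s) s) (hφ' : HasDerivAt φ' φ'' (‖ξ‖ ^ 2))
    (u v : E) :
    fderiv ℝ (fun y => fderiv ℝ (fun x : E => φ (‖x‖ ^ 2)) y v) ξ u
      = 2 * φ' (‖ξ‖ ^ 2) * ⟪u, v⟫ + 4 * φ'' * ⟪ξ, u⟫ * ⟪ξ, v⟫ := by
  have hnear : ∀ᶠ y in 𝓝 ξ, HasDerivAt φ (φ' (‖y‖ ^ 2)) (‖y‖ ^ 2) :=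
    (by fun_prop : Continuous fun y : E => ‖y‖ ^ 2).continuousAt.eventually hφ
  have hfirst : (fun y => fderiv ℝ (fun x : E => φ (‖x‖ ^ 2)) y v)
      =ᶠ[𝓝 ξ] fun y => 2 * φ' (‖y‖ ^ 2) * ⟪y, v⟫ := by
    filter_upwards [hnear] with y hy
    simp [(hasFDerivAt_comp_norm_sq hy).fderiv]
  have hcoeff : HasFDerivAt (fun y : E => 2 * φ' (‖y‖ ^ 2))
      ((2 * (2 * φ'')) • innerSL ℝ ξ) ξ := by
    refine ((hφ'.comp_hasFDerivAt ξ (hasStrictFDerivAt_norm_sq ξ).hasFDerivAt).const_mul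
      2).congr_fderiv ?_
    ext w
    simp only [smul_apply, coe_innerSL_apply, nsmul_eq_mul, Nat.cast_ofNat, smul_eq_mul]
    ring
  have hinner : HasFDerivAt (fun y : E => ⟪y, v⟫) (innerSL ℝ v) ξ := by
    convert (innerSL ℝ v).hasFDerivAt using 1
    ext y; exact real_inner_comm _ _
  have hprod : HasFDerivAt (fun y : E => 2 * φ' (‖y‖ ^ 2) * ⟪y, v⟫) _ ξ := hcoeff.mul hinner
  rw [hfirst.fderiv_eq, hprod.fderiv]
  simp only [add_apply, smul_apply, coe_innerSL_apply, real_inner_comm, smul_eq_mul]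
  ring

end Radial

theorem det_hessian_comp_norm_sq {ι : Type*} [Fintype ι] [DecidableEq ι] {φ φ' : ℝ → ℝ}
    {φ'' : ℝ} {ξ : EuclideanSpace ℝ ι} (hφ : ∀ᶠ s in 𝓝 (‖ξ‖ ^ 2), HasDerivAt φ (φ' s) s)
    (hφ' : HasDerivAt φ' φ'' (‖ξ‖ ^ 2)) (h0 : φ' (‖ξ‖ ^ 2) ≠ 0) :
    (Matrix.of fun i j : ι =>
        fderiv ℝ (fun y => fderiv ℝ (fun x : EuclideanSpace ℝ ι => φ (‖x‖ ^ 2)) y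
          (EuclideanSpace.single j 1)) ξ (EuclideanSpace.single i 1)).det
      = (2 * φ' (‖ξ‖ ^ 2)) ^ Fintype.card ι * (1 + 2 * φ'' * ‖ξ‖ ^ 2 / φ' (‖ξ‖ ^ 2)) := by
  have hmatrix : (Matrix.of fun i j : ι =>
        fderiv ℝ (fun y => fderiv ℝ (fun x : EuclideanSpace ℝ ι => φ (‖x‖ ^ 2)) y
          (EuclideanSpace.single j 1)) ξ (EuclideanSpace.single i 1))
      = (2 * φ' (‖ξ‖ ^ 2)) • 1 + Matrix.vecMulVec ((4 * φ'') • ⇑ξ) ⇑ξ := by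
    ext i j
    simp only [Matrix.of_apply, fderiv_fderiv_comp_norm_sq_apply hφ hφ',
      EuclideanSpace.inner_single_right, PiLp.single_apply, eq_comm,
      MonoidWithZeroHom.map_ite_one_zero, mul_ite, mul_one, mul_zero, Real.ringHom_apply, one_mul,
      Matrix.smul_vecMulVec, Matrix.add_apply, Matrix.smul_apply, Matrix.one_apply, smul_eq_mul,
      Matrix.vecMulVec_apply]
    ring
  have hnorm : (⇑ξ) ⬝ᵥ ⇑ξ = ‖ξ‖ ^ 2 := by
    rw [← real_inner_self_eq_norm_sq, EuclideanSpace.inner_eq_star_dotProduct]; simp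
  rw [hmatrix, Matrix.det_smul_one_add_vecMulVec (mul_ne_zero two_ne_zero h0),
    dotProduct_smul, hnorm, smul_eq_mul]
  field_simp
  ring

theorem hasDerivAt_sqrt_one_add_sub {ε s : ℝ} (hs : 0 < 1 + s - ε ^ 2 * s ^ 2) :
    HasDerivAt (fun s => √(1 + s - ε ^ 2 * s ^ 2))
      ((1 - 2 * ε ^ 2 * s) / (2 * √(1 + s - ε ^ 2 * s ^ 2))) s := by
  have hg : HasDerivAt (fun s : ℝ => 1 + s - ε ^ 2 * s ^ 2) (1 - 2 * ε ^ 2 * s) s := by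
    refine (((hasDerivAt_id' s).const_add 1).sub
      ((hasDerivAt_pow 2 s).const_mul (ε ^ 2))).congr_deriv ?_
    ring
  exact hg.sqrt hs.ne'

theorem hasDerivAt_div_two_sqrt_one_add_sub {ε t : ℝ} (ht : 0 < 1 + t - ε ^ 2 * t ^ 2) :
    HasDerivAt (fun s => (1 - 2 * ε ^ 2 * s) / (2 * √(1 + s - ε ^ 2 * s ^ 2)))
      ((-4 * ε ^ 2 * (1 + t - ε ^ 2 * t ^ 2) - (1 - 2 * ε ^ 2 * t) ^ 2)
        / (4 * √(1 + t - ε ^ 2 * t ^ 2) ^ 3)) t := by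
  have hs : 0 < √(1 + t - ε ^ 2 * t ^ 2) := Real.sqrt_pos.mpr ht
  have hnum : HasDerivAt (fun s : ℝ => 1 - 2 * ε ^ 2 * s) (-(2 * ε ^ 2)) t := by
    simpa using ((hasDerivAt_id' t).const_mul (2 * ε ^ 2)).const_sub 1
  refine (hnum.div ((hasDerivAt_sqrt_one_add_sub ht).const_mul 2) (by positivity)).congr_deriv ?_
  have hs2 := Real.sq_sqrt ht.le
  field_simp
  rw [hs2]
  ring

theorem det_hessian_sqrt_one_add_norm_sq_sub {ι : Type*} [Fintype ι] [DecidableEq ι] {ε : ℝ}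
    {ξ : EuclideanSpace ℝ ι} (hg : 0 < 1 + ‖ξ‖ ^ 2 - ε ^ 2 * ‖ξ‖ ^ 4)
    (ha : 1 - 2 * ε ^ 2 * ‖ξ‖ ^ 2 ≠ 0) :
    (Matrix.of fun i j : ι =>
        fderiv ℝ
          (fun y : EuclideanSpace ℝ ι =>
            fderiv ℝ (fun x : EuclideanSpace ℝ ι =>
                Real.sqrt (1 + ‖x‖ ^ 2 - ε ^ 2 * ‖x‖ ^ 4)) y (EuclideanSpace.single j 1))
          ξ (EuclideanSpace.single i 1)).det
      = ((1 - 2 * ε ^ 2 * ‖ξ‖ ^ 2) / Real.sqrt (1 + ‖ξ‖ ^ 2 - ε ^ 2 * ‖ξ‖ ^ 4)) ^ Fintype.card ι *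
          ((1 - 6 * ε ^ 2 * ‖ξ‖ ^ 2 - 3 * ε ^ 2 * ‖ξ‖ ^ 4 + 2 * ε ^ 4 * ‖ξ‖ ^ 6) /
            ((Real.sqrt (1 + ‖ξ‖ ^ 2 - ε ^ 2 * ‖ξ‖ ^ 4)) ^ 2 * (1 - 2 * ε ^ 2 * ‖ξ‖ ^ 2))) := by
  have hfun : (fun x : EuclideanSpace ℝ ι => √(1 + ‖x‖ ^ 2 - ε ^ 2 * ‖x‖ ^ 4))
      = fun x => (fun s => √(1 + s - ε ^ 2 * s ^ 2)) (‖x‖ ^ 2) := by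
    funext x; ring_nf
  have hg' : 0 < 1 + ‖ξ‖ ^ 2 - ε ^ 2 * (‖ξ‖ ^ 2) ^ 2 := by linarith [pow_mul ‖ξ‖ 2 2]
  have hnear : ∀ᶠ s in 𝓝 (‖ξ‖ ^ 2), 0 < 1 + s - ε ^ 2 * s ^ 2 :=
    continuousAt_const.eventually_lt
      (by fun_prop : Continuous fun s : ℝ => 1 + s - ε ^ 2 * s ^ 2).continuousAt hg'
  rw [hfun, det_hessian_comp_norm_sq (hnear.mono fun s => hasDerivAt_sqrt_one_add_sub)
    (hasDerivAt_div_two_sqrt_one_add_sub hg') (by positivity)]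
  have hs2 := Real.sq_sqrt hg.le
  have hsq : (‖ξ‖ ^ 2) ^ 2 = ‖ξ‖ ^ 4 := by ring
  rw [hsq]
  congr 1
  · field_simp
  · field_simp
    rw [hs2]
    ring

theorem hessian_factors_lower_bounds {ε κ₀ r : ℝ} (hε : 0 ≤ ε)
    (hκ : 1 / 2 ≤ 1 - 12 * ε * κ₀ - 12 * κ₀ ^ 2) (hreg : ε * r ^ 2 ≤ 2 * κ₀) :
    5 / 6 ≤ 1 - 2 * ε ^ 2 * r ^ 2 ∧
      1 / 2 ≤ 1 - 6 * ε ^ 2 * r ^ 2 - 3 * ε ^ 2 * r ^ 4 + 2 * ε ^ 4 * r ^ 6 := by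
  have hεr : 0 ≤ ε * r ^ 2 := by positivity
  have hεκ : 0 ≤ ε * κ₀ := mul_nonneg hε (by linarith)
  have h2 : ε ^ 2 * r ^ 2 ≤ 2 * (ε * κ₀) := by nlinarith
  have h4 : ε ^ 2 * r ^ 4 ≤ 4 * κ₀ ^ 2 := by nlinarith
  have h6 : 0 ≤ ε ^ 4 * r ^ 6 := by positivity
  constructor <;> nlinarith [sq_nonneg κ₀]

theorem le_hessian_det_closed_form {ε r : ℝ} (hr : r ^ 2 ≤ 4) (ha : 5 / 6 ≤ 1 - 2 * ε ^ 2 * r ^ 2)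
    (hN : 1 / 2 ≤ 1 - 6 * ε ^ 2 * r ^ 2 - 3 * ε ^ 2 * r ^ 4 + 2 * ε ^ 4 * r ^ 6) :
    1 / (2 ^ 4 * 5 ^ 2) ≤ ((1 - 2 * ε ^ 2 * r ^ 2) / √(1 + r ^ 2 - ε ^ 2 * r ^ 4)) ^ 3 *
      ((1 - 6 * ε ^ 2 * r ^ 2 - 3 * ε ^ 2 * r ^ 4 + 2 * ε ^ 4 * r ^ 6) /
        (√(1 + r ^ 2 - ε ^ 2 * r ^ 4) ^ 2 * (1 - 2 * ε ^ 2 * r ^ 2))) := by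
  set a := 1 - 2 * ε ^ 2 * r ^ 2
  set N := 1 - 6 * ε ^ 2 * r ^ 2 - 3 * ε ^ 2 * r ^ 4 + 2 * ε ^ 4 * r ^ 6
  have hg : 0 < 1 + r ^ 2 - ε ^ 2 * r ^ 4 := by nlinarith [sq_nonneg r]
  set s := √(1 + r ^ 2 - ε ^ 2 * r ^ 4)
  have hs : 0 < s := Real.sqrt_pos.mpr hg
  have hs2 : s ^ 2 ≤ 5 := by rw [Real.sq_sqrt hg.le]; nlinarith [sq_nonneg (ε * r ^ 2)]
  have hs5 : s ^ 5 ≤ 75 := by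
    have hs3 : s ≤ 3 := by nlinarith
    calc s ^ 5 = (s ^ 2) ^ 2 * s := by ring
      _ ≤ 5 ^ 2 * 3 := by gcongr
      _ = 75 := by norm_num
  calc (1 : ℝ) / (2 ^ 4 * 5 ^ 2) ≤ (5 / 6) ^ 2 * (1 / 2) / 75 := by norm_num
    _ ≤ a ^ 2 * N / s ^ 5 := by gcongr
    _ = (a / s) ^ 3 * (N / (s ^ 2 * a)) := by field_simp

theorem stmt3_general (ε κ₀ : ℝ) (hε : 0 < ε)
    (hκ1 : 1 / 2 ≤ 1 - 12 * ε * κ₀ - 12 * κ₀ ^ 2)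
    (ξ : EuclideanSpace ℝ (Fin 3)) (hreg : ε * ‖ξ‖ ^ 2 ≤ 2 * κ₀) :
    (Matrix.of fun i j : Fin 3 =>
        fderiv ℝ
          (fun y : EuclideanSpace ℝ (Fin 3) =>
            fderiv ℝ (fun x : EuclideanSpace ℝ (Fin 3) =>
                Real.sqrt (1 + ‖x‖ ^ 2 - ε ^ 2 * ‖x‖ ^ 4)) y (EuclideanSpace.single j 1))
          ξ (EuclideanSpace.single i 1)).det
      = ((1 - 2 * ε ^ 2 * ‖ξ‖ ^ 2) / Real.sqrt (1 + ‖ξ‖ ^ 2 - ε ^ 2 * ‖ξ‖ ^ 4)) ^ 3 *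
          ((1 - 6 * ε ^ 2 * ‖ξ‖ ^ 2 - 3 * ε ^ 2 * ‖ξ‖ ^ 4 + 2 * ε ^ 4 * ‖ξ‖ ^ 6) /
            ((Real.sqrt (1 + ‖ξ‖ ^ 2 - ε ^ 2 * ‖ξ‖ ^ 4)) ^ 2 * (1 - 2 * ε ^ 2 * ‖ξ‖ ^ 2))) ∧
    (‖ξ‖ ≤ 2 →
      1 / (2 ^ 4 * 5 ^ 2) ≤
        (Matrix.of fun i j : Fin 3 =>
          fderiv ℝ
            (fun y : EuclideanSpace ℝ (Fin 3) =>
              fderiv ℝ (fun x : EuclideanSpace ℝ (Fin 3) =>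
                  Real.sqrt (1 + ‖x‖ ^ 2 - ε ^ 2 * ‖x‖ ^ 4)) y (EuclideanSpace.single j 1))
            ξ (EuclideanSpace.single i 1)).det) := by
  obtain ⟨ha, hN⟩ := hessian_factors_lower_bounds hε.le hκ1 hreg
  have hg : 0 < 1 + ‖ξ‖ ^ 2 - ε ^ 2 * ‖ξ‖ ^ 4 := by nlinarith [sq_nonneg ‖ξ‖]
  have hdet := det_hessian_sqrt_one_add_norm_sq_sub hg (by linarith : 1 - 2 * ε ^ 2 * ‖ξ‖ ^ 2 ≠ 0)
  rw [Fintype.card_fin] at hdet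
  refine ⟨hdet, fun hξ => ?_⟩
  rw [hdet]
  exact le_hessian_det_closed_form (by nlinarith [norm_nonneg ξ]) ha hN

/-- explicit formula for the Hessian determinant of
`b(ξ) = √(1+|ξ|²−ε²|ξ|⁴)` on the region `ε|ξ|² ≤ 2κ₀` (for `κ₀` small enough, quantified by
`1−12εκ₀−12κ₀² ≥ 1/2` and `1−4εκ₀ ≥ 1/2`), and the uniform-in-`ε` lower bound
`det ∇²b(ξ) ≥ 1/(2⁴·5²)` when moreover `|ξ| ≤ 2`. -/
theorem stmt3 (ε κ₀ : ℝ) (hε : 0 < ε) (hε1 : ε ≤ 1) (hκ : 0 < κ₀)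
    (hκ1 : 1 / 2 ≤ 1 - 12 * ε * κ₀ - 12 * κ₀ ^ 2) (hκ2 : 1 / 2 ≤ 1 - 4 * ε * κ₀)
    (ξ : EuclideanSpace ℝ (Fin 3)) (hreg : ε * ‖ξ‖ ^ 2 ≤ 2 * κ₀) :
    (Matrix.of fun i j : Fin 3 =>
        fderiv ℝ
          (fun y : EuclideanSpace ℝ (Fin 3) =>
            fderiv ℝ (fun x : EuclideanSpace ℝ (Fin 3) =>
                Real.sqrt (1 + ‖x‖ ^ 2 - ε ^ 2 * ‖x‖ ^ 4)) y (EuclideanSpace.single j 1))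
          ξ (EuclideanSpace.single i 1)).det
      = ((1 - 2 * ε ^ 2 * ‖ξ‖ ^ 2) / Real.sqrt (1 + ‖ξ‖ ^ 2 - ε ^ 2 * ‖ξ‖ ^ 4)) ^ 3 *
          ((1 - 6 * ε ^ 2 * ‖ξ‖ ^ 2 - 3 * ε ^ 2 * ‖ξ‖ ^ 4 + 2 * ε ^ 4 * ‖ξ‖ ^ 6) /
            ((Real.sqrt (1 + ‖ξ‖ ^ 2 - ε ^ 2 * ‖ξ‖ ^ 4)) ^ 2 * (1 - 2 * ε ^ 2 * ‖ξ‖ ^ 2))) ∧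
    (‖ξ‖ ≤ 2 →
      1 / (2 ^ 4 * 5 ^ 2) ≤
        (Matrix.of fun i j : Fin 3 =>
          fderiv ℝ
            (fun y : EuclideanSpace ℝ (Fin 3) =>
              fderiv ℝ (fun x : EuclideanSpace ℝ (Fin 3) =>
                  Real.sqrt (1 + ‖x‖ ^ 2 - ε ^ 2 * ‖x‖ ^ 4)) y (EuclideanSpace.single j 1))
            ξ (EuclideanSpace.single i 1)).det) :=
  stmt3_general ε κ₀ hε hκ1 ξ hreg
end

section
/- Let ε ∈ (0,1], κ₀ ≤ 1/200, ξ, η ∈ ℝ³ with ε²|ξ|⁴ ≤ 16κ₀², ε²|η|⁴ ≤ 16κ₀², ε²|ξ+η|⁴ ≤ 16κ₀². Define b(ζ) = √(1+|ζ|²−ε²|ζ|⁴) and A = (b(ξ)+b(η))² − b(ξ+η)². Then A ≥ c · (⟨ξ⟩+⟨η⟩)²/(⟨ξ⟩⟨η⟩) ≥ c for a universal constant c > 0 independent of ε. -/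
set_option maxHeartbeats 1000000

/-- lower bound for `A = (b(ξ)+b(η))² − b(ξ+η)²` (the denominator of the
resonance function), with `b(ζ) = √(1+|ζ|²−ε²|ζ|⁴)`, on the truncated region
`ε²|ξ|⁴, ε²|η|⁴, ε²|ξ+η|⁴ ≤ 16κ₀²`, `κ₀ ≤ 1/200`:
`A ≥ c·(⟨ξ⟩+⟨η⟩)²/(⟨ξ⟩⟨η⟩) ≥ c` for a universal `c > 0` independent of `ε`. -/
theorem stmt13 :
    ∃ c : ℝ, 0 < c ∧
      ∀ (ε κ₀ : ℝ) (ξ η : EuclideanSpace ℝ (Fin 3)),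
        0 < ε → ε ≤ 1 → 0 < κ₀ → κ₀ ≤ 1 / 200 →
        ε ^ 2 * ‖ξ‖ ^ 4 ≤ 16 * κ₀ ^ 2 → ε ^ 2 * ‖η‖ ^ 4 ≤ 16 * κ₀ ^ 2 →
        ε ^ 2 * ‖ξ + η‖ ^ 4 ≤ 16 * κ₀ ^ 2 →
        c * (Real.sqrt (1 + ‖ξ‖ ^ 2) + Real.sqrt (1 + ‖η‖ ^ 2)) ^ 2 /
              (Real.sqrt (1 + ‖ξ‖ ^ 2) * Real.sqrt (1 + ‖η‖ ^ 2))
            ≤ (Real.sqrt (1 + ‖ξ‖ ^ 2 - ε ^ 2 * ‖ξ‖ ^ 4) +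
                  Real.sqrt (1 + ‖η‖ ^ 2 - ε ^ 2 * ‖η‖ ^ 4)) ^ 2 -
                (Real.sqrt (1 + ‖ξ + η‖ ^ 2 - ε ^ 2 * ‖ξ + η‖ ^ 4)) ^ 2 ∧
          c ≤ (Real.sqrt (1 + ‖ξ‖ ^ 2 - ε ^ 2 * ‖ξ‖ ^ 4) +
                  Real.sqrt (1 + ‖η‖ ^ 2 - ε ^ 2 * ‖η‖ ^ 4)) ^ 2 -
                (Real.sqrt (1 + ‖ξ + η‖ ^ 2 - ε ^ 2 * ‖ξ + η‖ ^ 4)) ^ 2 := by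
  refine ⟨1/8, by norm_num, ?_⟩
  intro ε κ₀ ξ η hε hε1 hκ hκ2 hxt hyt hzt
  set x := ‖ξ‖ with hxdef
  set y := ‖η‖ with hydef
  set z := ‖ξ + η‖ with hzdef
  have hx0 : 0 ≤ x := norm_nonneg _
  have hy0 : 0 ≤ y := norm_nonneg _
  have hz0 : 0 ≤ z := norm_nonneg _
  have hzxy : z ≤ x + y := norm_add_le _ _
  have hκ' : 32 * κ₀ ^ 2 ≤ 1 / 1250 := by
    have h1 : κ₀ * κ₀ ≤ (1/200) * (1/200) := mul_le_mul hκ2 hκ2 hκ.le (by norm_num)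
    calc 32 * κ₀ ^ 2 = 32 * (κ₀ * κ₀) := by ring
    _ ≤ 32 * ((1/200) * (1/200)) := by linarith only [h1]
    _ ≤ 1 / 1250 := by norm_num
  have hax : 0 ≤ ε ^ 2 * x ^ 4 := by positivity
  have hay : 0 ≤ ε ^ 2 * y ^ 4 := by positivity
  have haz : 0 ≤ ε ^ 2 * z ^ 4 := by positivity
  set u := 1 + x ^ 2 - ε ^ 2 * x ^ 4 with hudef
  set v := 1 + y ^ 2 - ε ^ 2 * y ^ 4 with hvdef
  set w := 1 + z ^ 2 - ε ^ 2 * z ^ 4 with hwdef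
  have hu0 : 0 < u := by
    rw [hudef]; linarith only [hxt, hκ', sq_nonneg x]
  have hv0 : 0 < v := by
    rw [hvdef]; linarith only [hyt, hκ', sq_nonneg y]
  have hw0 : 0 ≤ w := by
    rw [hwdef]; linarith only [hzt, hκ', sq_nonneg z]
  set s := Real.sqrt (1 + x ^ 2) with hsdef
  set t := Real.sqrt (1 + y ^ 2) with htdef
  have hs2 : s ^ 2 = 1 + x ^ 2 := Real.sq_sqrt (by positivity)
  have ht2 : t ^ 2 = 1 + y ^ 2 := Real.sq_sqrt (by positivity)
  have hs0 : 0 < s := Real.sqrt_pos.mpr (by positivity)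
  have ht0 : 0 < t := Real.sqrt_pos.mpr (by positivity)
  have hxs : x ≤ s := by
    calc x = Real.sqrt (x ^ 2) := (Real.sqrt_sq hx0).symm
    _ ≤ s := Real.sqrt_le_sqrt (by linarith only [])
  have hyt' : y ≤ t := by
    calc y = Real.sqrt (y ^ 2) := (Real.sqrt_sq hy0).symm
    _ ≤ t := Real.sqrt_le_sqrt (by linarith only [])
  have hbs : Real.sqrt u ≤ s := Real.sqrt_le_sqrt (by rw [hudef]; linarith only [hax])
  have hbt : Real.sqrt v ≤ t := Real.sqrt_le_sqrt (by rw [hvdef]; linarith only [hay])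
  -- key product estimate
  have huv2 : (Real.sqrt (u * v)) ^ 2 = u * v := Real.sq_sqrt (by positivity)
  have ha1 : (ε ^ 2 * x ^ 4) * (1 + y ^ 2) ≤ (16 * κ₀ ^ 2) * (1 + y ^ 2) :=
    mul_le_mul_of_nonneg_right hxt (by positivity)
  have hb1 : (ε ^ 2 * y ^ 4) * (1 + x ^ 2) ≤ (16 * κ₀ ^ 2) * (1 + x ^ 2) :=
    mul_le_mul_of_nonneg_right hyt (by positivity)
  have hab : 0 ≤ (ε ^ 2 * x ^ 4) * (ε ^ 2 * y ^ 4) := by positivity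
  have hk1 : 0 ≤ (16 * κ₀ ^ 2) * x ^ 2 := by positivity
  have hk2 : 0 ≤ (16 * κ₀ ^ 2) * y ^ 2 := by positivity
  have hR : (1 - 32 * κ₀ ^ 2) * (1 + x ^ 2 + y ^ 2) ≤ u * v - x ^ 2 * y ^ 2 := by
    rw [hudef, hvdef]
    linarith only [ha1, hb1, hab, hk1, hk2]
  have hR0 : (0:ℝ) ≤ (1 - 32 * κ₀ ^ 2) * (1 + x ^ 2 + y ^ 2) := by
    have h1 : (0:ℝ) ≤ 1 - 32 * κ₀ ^ 2 := by linarith only [hκ']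
    positivity
  have hxyle : x * y ≤ Real.sqrt (u * v) := by
    calc x * y = Real.sqrt ((x * y) ^ 2) := (Real.sqrt_sq (by positivity)).symm
    _ ≤ Real.sqrt (u * v) := Real.sqrt_le_sqrt (by linarith only [hR, hR0])
  have hsumle : Real.sqrt (u * v) + x * y ≤ 2 * (s * t) := by
    have h1 : Real.sqrt (u * v) ≤ s * t := by
      rw [Real.sqrt_mul hu0.le]
      exact mul_le_mul hbs hbt (Real.sqrt_nonneg _) hs0.le
    have h2 : x * y ≤ s * t := mul_le_mul hxs hyt' hy0 hs0.le
    linarith only [h1, h2]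
  have hd0 : 0 ≤ Real.sqrt (u * v) - x * y := by linarith only [hxyle]
  have hkey : (1 - 32 * κ₀ ^ 2) * (1 + x ^ 2 + y ^ 2)
      ≤ (Real.sqrt (u * v) - x * y) * (2 * (s * t)) := by
    calc (1 - 32 * κ₀ ^ 2) * (1 + x ^ 2 + y ^ 2)
        ≤ u * v - x ^ 2 * y ^ 2 := hR
      _ = (Real.sqrt (u * v) - x * y) * (Real.sqrt (u * v) + x * y) := by
          linear_combination -huv2
      _ ≤ (Real.sqrt (u * v) - x * y) * (2 * (s * t)) :=
          mul_le_mul_of_nonneg_left hsumle hd0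
  -- expand A
  have hAexp : (Real.sqrt u + Real.sqrt v) ^ 2 - (Real.sqrt w) ^ 2
      = u + v - w + 2 * Real.sqrt (u * v) := by
    rw [add_sq, Real.sq_sqrt hu0.le, Real.sq_sqrt hv0.le, Real.sq_sqrt hw0,
      Real.sqrt_mul hu0.le]
    ring
  have hz2 : z ^ 2 ≤ (x + y) ^ 2 := by
    have h1 : z * z ≤ (x + y) * (x + y) := mul_self_le_mul_self hz0 hzxy
    calc z ^ 2 = z * z := sq z
    _ ≤ (x + y) * (x + y) := h1
    _ = (x + y) ^ 2 := (sq (x + y)).symm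
  have huvw : 1 - 32 * κ₀ ^ 2 - 2 * (x * y) ≤ u + v - w := by
    rw [hudef, hvdef, hwdef]
    linarith only [hz2, haz, hxt, hyt]
  have hA : (1 - 32 * κ₀ ^ 2) + (Real.sqrt (u * v) - x * y) * 2
      ≤ (Real.sqrt u + Real.sqrt v) ^ 2 - (Real.sqrt w) ^ 2 := by
    rw [hAexp]; linarith only [huvw]
  constructor
  · rw [div_le_iff₀ (by positivity)]
    have hAS : ((1 - 32 * κ₀ ^ 2) + (Real.sqrt (u * v) - x * y) * 2) * (s * t)
        ≤ ((Real.sqrt u + Real.sqrt v) ^ 2 - (Real.sqrt w) ^ 2) * (s * t) :=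
      mul_le_mul_of_nonneg_right hA (by positivity)
    have hst0 : 0 ≤ (1 - 32 * κ₀ ^ 2) * (s * t) := by
      have h1 : (0:ℝ) ≤ 1 - 32 * κ₀ ^ 2 := by linarith only [hκ']
      positivity
    have h1 : 1 / 8 * (s + t) ^ 2 ≤ (1 / 2) * (1 + x ^ 2 + y ^ 2) := by
      linarith only [hs2, ht2, sq_nonneg (s - t), sq_nonneg x, sq_nonneg y]
    have h2 : (1 / 2) * (1 + x ^ 2 + y ^ 2) ≤ (1 - 32 * κ₀ ^ 2) * (1 + x ^ 2 + y ^ 2) :=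
      mul_le_mul_of_nonneg_right (by linarith only [hκ']) (by positivity)
    linarith only [hAS, hkey, hst0, h1, h2]
  · linarith only [hA, hκ', hd0]
end

section
/- Let ε ∈ (0,1], κ₀ ≤ 1/200, and let ξ, η ∈ ℝ³ lie in the region ε²|ξ|⁴, ε²|η|⁴, ε²|ξ+η|⁴ ≤ 16κ₀². With b(ζ) = √(1+|ζ|²−ε²|ζ|⁴), the phase φ₁₁(ξ,η) = b(ξ)+b(η)−b(ξ+η) satisfies φ₁₁(ξ,η) > 0 and 1/φ₁₁(ξ,η) ≤ C min{b(ξ), b(η), b(ξ+η)} with C independent of ε. -/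
private lemma le_of_sq_le_sq' (a b : ℝ) (hb : 0 ≤ b) (h : a^2 ≤ b^2) : a ≤ b := by
  nlinarith [sq_nonneg (a - b), sq_nonneg (a + b)]

private lemma step7 (n1 d1 t : ℝ) (hd1 : d1^2 = 1+n1^2) (ht : t^2 = 24/25+n1^2)
    (htn : 0 ≤ t) : 4*d1 ≤ 5*(24/25)^2*t := by
  refine le_of_sq_le_sq' _ _ (by positivity) ?_
  have e1 : (4*d1)^2 = 16*(1+n1^2) := by rw [mul_pow, hd1]; ring
  have e2 : (5*(24/25:ℝ)^2*t)^2 = 25*(24/25)^4*(24/25+n1^2) := by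
    rw [mul_pow, mul_pow, ht]; ring
  rw [e1, e2]; nlinarith [sq_nonneg n1]

set_option maxHeartbeats 1000000 in
private lemma auxB (n1 n2 n3 P1 P2 P3 : ℝ)
    (h1 : 0 ≤ n1) (h2 : 0 ≤ n2) (h3 : 0 ≤ n3) (htri : n3 ≤ n1 + n2)
    (hP1l : 24/25 + n1^2 ≤ P1) (hP1u : P1 ≤ 1 + n1^2)
    (hP2l : 24/25 + n2^2 ≤ P2) (hP2u : P2 ≤ 1 + n2^2)
    (hP3l : 0 ≤ P3) (hP3u : P3 ≤ 1 + n3^2)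
    (h12 : n1 ≤ n2) :
    0 < Real.sqrt P1 + Real.sqrt P2 - Real.sqrt P3 ∧
    1 / (Real.sqrt P1 + Real.sqrt P2 - Real.sqrt P3) ≤ 5 * Real.sqrt (24/25 + n1^2) := by
  have hn1sq : (0:ℝ) ≤ n1^2 := sq_nonneg _
  have hn2sq : (0:ℝ) ≤ n2^2 := sq_nonneg _
  have hP1pos : (0:ℝ) ≤ P1 := by linarith
  have hP2pos : (0:ℝ) ≤ P2 := by linarith
  set s1 := Real.sqrt P1 with hs1def
  set s2 := Real.sqrt P2 with hs2def
  set s3 := Real.sqrt P3 with hs3def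
  set d1 := Real.sqrt (1 + n1^2) with hd1def
  set d2 := Real.sqrt (1 + n2^2) with hd2def
  set t := Real.sqrt (24/25 + n1^2) with htdef
  have hs1 : s1^2 = P1 := Real.sq_sqrt hP1pos
  have hs2 : s2^2 = P2 := Real.sq_sqrt hP2pos
  have hs3 : s3^2 = P3 := Real.sq_sqrt hP3l
  have hd1 : d1^2 = 1 + n1^2 := Real.sq_sqrt (by positivity)
  have hd2 : d2^2 = 1 + n2^2 := Real.sq_sqrt (by positivity)
  have ht : t^2 = 24/25 + n1^2 := Real.sq_sqrt (by positivity)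
  have hs1n : 0 ≤ s1 := Real.sqrt_nonneg _
  have hs2n : 0 ≤ s2 := Real.sqrt_nonneg _
  have hs3n : 0 ≤ s3 := Real.sqrt_nonneg _
  have hd1n : 0 ≤ d1 := Real.sqrt_nonneg _
  have hd2n : 0 ≤ d2 := Real.sqrt_nonneg _
  have htn : 0 ≤ t := Real.sqrt_nonneg _
  have hs1d1 : s1 ≤ d1 := Real.sqrt_le_sqrt hP1u
  have hs2d2 : s2 ≤ d2 := Real.sqrt_le_sqrt hP2u
  have hd12 : d1 ≤ d2 := Real.sqrt_le_sqrt (by linarith [mul_self_le_mul_self h1 h12, sq_abs n1, sq_abs n2, sq_nonneg n1, sq_nonneg n2, sq n1])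
  clear_value s1 s2 s3 d1 d2 t
  have hd1one : 1 ≤ d1 := le_of_sq_le_sq' 1 d1 hd1n (by rw [hd1]; linarith)
  have hd2one : 1 ≤ d2 := le_of_sq_le_sq' 1 d2 hd2n (by rw [hd2]; linarith)
  have hn1d1 : n1 ≤ d1 := le_of_sq_le_sq' n1 d1 hd1n (by rw [hd1]; linarith)
  have hn2d2 : n2 ≤ d2 := le_of_sq_le_sq' n2 d2 hd2n (by rw [hd2]; linarith)
  have hs1lb : (9/10 : ℝ) ≤ s1 := le_of_sq_le_sq' (9/10) s1 hs1n (by rw [hs1]; linarith)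
  have hs2lb : (9/10 : ℝ) ≤ s2 := le_of_sq_le_sq' (9/10) s2 hs2n (by rw [hs2]; linarith)
  have h3sq : n3^2 ≤ n1^2 + 2*(n1*n2) + n2^2 := by
    linarith [pow_le_pow_left₀ h3 htri 2]
  have hn12 : n1*n2 ≤ n2^2 := by
    have := mul_le_mul_of_nonneg_right h12 h2
    linarith [sq n2]
  have hn11 : n1^2 ≤ n2^2 := by
    linarith [mul_self_le_mul_self h1 h12]
  have hs3ub : s3 ≤ 2*d2 := by
    refine le_of_sq_le_sq' s3 (2*d2) (by linarith) ?_
    have e : (2*d2)^2 = 4*(1+n2^2) := by rw [mul_pow, hd2]; ring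
    rw [hs3, e]
    linarith
  have hprod : (24/25 + n1^2) * (24/25 + n2^2) ≤ s1^2 * s2^2 := by
    rw [hs1, hs2]; exact mul_le_mul hP1l hP2l (by linarith) hP1pos
  have hu0 : n1*n2 ≤ s1*s2 := by
    refine le_of_sq_le_sq' (n1*n2) (s1*s2) (mul_nonneg hs1n hs2n) ?_
    rw [mul_pow, mul_pow]
    linarith [hprod]
  have hsum : s1*s2 + n1*n2 ≤ 2*(d1*d2) := by
    have a1 : s1*s2 ≤ d1*d2 := mul_le_mul hs1d1 hs2d2 hs2n hd1n
    have a2 : n1*n2 ≤ d1*d2 := mul_le_mul hn1d1 hn2d2 h2 hd1n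
    linarith
  have hkey : (24/25:ℝ)^2 + (24/25)*(n1^2+n2^2) ≤ (s1*s2 - n1*n2) * (2*(d1*d2)) :=
    calc (24/25:ℝ)^2 + (24/25)*(n1^2+n2^2)
        = (24/25 + n1^2) * (24/25 + n2^2) - n1^2*n2^2 := by ring
      _ ≤ s1^2*s2^2 - n1^2*n2^2 := by linarith [hprod]
      _ = (s1*s2 - n1*n2)*(s1*s2 + n1*n2) := by ring
      _ ≤ (s1*s2 - n1*n2)*(2*(d1*d2)) :=
          mul_le_mul_of_nonneg_left hsum (by linarith)
  have hdd : 1 ≤ d1*d2 := by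
    have := mul_le_mul hd1one hd2one zero_le_one (le_trans zero_le_one hd1one)
    linarith
  have hA1 : (2*(24/25:ℝ) - 1) + 2*(s1*s2 - n1*n2) ≤ (s1+s2)^2 - s3^2 := by
    have e : (s1+s2)^2 - s3^2 = P1 + P2 - P3 + 2*(s1*s2) := by
      rw [← hs1, ← hs2, ← hs3]; ring
    rw [e]
    linarith
  have hAn : (24/25:ℝ)^2 * d2^2 ≤ ((s1+s2)^2 - s3^2) * (d1*d2) := by
    have H1 := mul_le_mul_of_nonneg_right hA1 (by positivity : (0:ℝ) ≤ d1*d2)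
    linarith [H1, hkey, hdd, hd2]
  have hApos : 0 < (s1+s2)^2 - s3^2 := by linarith [hA1, hu0]
  have hφpos : 0 < s1 + s2 - s3 := by
    by_contra hcon
    push_neg at hcon
    have h5 : 0 ≤ (-(s1+s2-s3)) * (s1+s2+s3) :=
      mul_nonneg (by linarith) (by linarith)
    linarith [h5, hApos]
  refine ⟨hφpos, ?_⟩
  have hS : s1 + s2 + s3 ≤ 4*d2 := by linarith
  have hAn' : (24/25:ℝ)^2 * d2^2 ≤ (s1+s2-s3)*(s1+s2+s3)*(d1*d2) := by
    have e : (s1+s2-s3)*(s1+s2+s3) = (s1+s2)^2 - s3^2 := by ring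
    rw [e]; exact hAn
  have h2' : (24/25:ℝ)^2 * d2^2 ≤ ((s1+s2-s3)*(4*d1)) * d2^2 := by
    have hx : 0 ≤ (s1+s2-s3) * (4*d2 - (s1+s2+s3)) * (d1*d2) :=
      mul_nonneg (mul_nonneg hφpos.le (by linarith)) (by positivity)
    linarith [hAn', hx]
  have h3' : (24/25:ℝ)^2 ≤ (s1+s2-s3)*(4*d1) := by
    have hd2sq : (0:ℝ) < d2^2 := by positivity
    exact le_of_mul_le_mul_right h2' hd2sq
  have hstep7 : 4*d1 ≤ 5*(24/25)^2*t := step7 n1 d1 t hd1 ht htn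
  have hfin : 1 ≤ 5*t*(s1+s2-s3) := by
    have h4 : (24/25:ℝ)^2 ≤ (s1+s2-s3)*(5*(24/25)^2*t) :=
      le_trans h3' (mul_le_mul_of_nonneg_left hstep7 hφpos.le)
    linarith [h4]
  rw [div_le_iff₀ hφpos]
  linarith [hfin]

set_option maxHeartbeats 1000000 in
private lemma aux (n1 n2 n3 P1 P2 P3 : ℝ)
    (h1 : 0 ≤ n1) (h2 : 0 ≤ n2) (h3 : 0 ≤ n3) (htri : n3 ≤ n1 + n2)
    (hP1l : 24/25 + n1^2 ≤ P1) (hP1u : P1 ≤ 1 + n1^2)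
    (hP2l : 24/25 + n2^2 ≤ P2) (hP2u : P2 ≤ 1 + n2^2)
    (hP3l : 24/25 + n3^2 ≤ P3) (hP3u : P3 ≤ 1 + n3^2) :
    0 < Real.sqrt P1 + Real.sqrt P2 - Real.sqrt P3 ∧
    1 / (Real.sqrt P1 + Real.sqrt P2 - Real.sqrt P3) ≤
      5 * min (Real.sqrt P1) (min (Real.sqrt P2) (Real.sqrt P3)) := by
  have hn1sq : (0:ℝ) ≤ n1^2 := sq_nonneg _
  have hn2sq : (0:ℝ) ≤ n2^2 := sq_nonneg _
  have hn3sq : (0:ℝ) ≤ n3^2 := sq_nonneg _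
  have hP1pos : (0:ℝ) ≤ P1 := by linarith
  have hP2pos : (0:ℝ) ≤ P2 := by linarith
  have hP3pos : (0:ℝ) ≤ P3 := by linarith
  have hs1n : 0 ≤ Real.sqrt P1 := Real.sqrt_nonneg _
  have hs2n : 0 ≤ Real.sqrt P2 := Real.sqrt_nonneg _
  have hs3n : 0 ≤ Real.sqrt P3 := Real.sqrt_nonneg _
  have hs1 : (Real.sqrt P1)^2 = P1 := Real.sq_sqrt hP1pos
  have hs2 : (Real.sqrt P2)^2 = P2 := Real.sq_sqrt hP2pos
  have hs3 : (Real.sqrt P3)^2 = P3 := Real.sq_sqrt hP3pos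
  have hs1lb : (9/10:ℝ) ≤ Real.sqrt P1 :=
    le_of_sq_le_sq' (9/10) _ hs1n (by rw [hs1]; linarith)
  have hs2lb : (9/10:ℝ) ≤ Real.sqrt P2 :=
    le_of_sq_le_sq' (9/10) _ hs2n (by rw [hs2]; linarith)
  have hs3lb : (9/10:ℝ) ≤ Real.sqrt P3 :=
    le_of_sq_le_sq' (9/10) _ hs3n (by rw [hs3]; linarith)
  have hminlb : (9/10:ℝ) ≤ min (Real.sqrt P1) (min (Real.sqrt P2) (Real.sqrt P3)) :=
    le_min hs1lb (le_min hs2lb hs3lb)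
  rcases le_or_gt (Real.sqrt P3) (max (Real.sqrt P1) (Real.sqrt P2)) with hcase | hcase
  · -- easy case: s3 ≤ max s1 s2, so φ ≥ min s1 s2 ≥ 9/10
    have hφ : (9/10:ℝ) ≤ Real.sqrt P1 + Real.sqrt P2 - Real.sqrt P3 := by
      rcases max_cases (Real.sqrt P1) (Real.sqrt P2) with ⟨he, _⟩ | ⟨he, _⟩ <;>
        rw [he] at hcase <;> linarith
    refine ⟨by linarith, ?_⟩
    have h10 : 1 / (Real.sqrt P1 + Real.sqrt P2 - Real.sqrt P3) ≤ 10/9 := by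
      rw [div_le_iff₀ (by linarith)]; linarith
    linarith
  · -- hard case: s3 > max s1 s2
    rcases max_lt_iff.mp hcase with ⟨ha, hb'⟩
    have hm : min (Real.sqrt P1) (min (Real.sqrt P2) (Real.sqrt P3)) =
        min (Real.sqrt P1) (Real.sqrt P2) := by
      rw [min_eq_left hb'.le]
    rw [hm]
    have hn12 : n1^2 ≤ n2^2 ∨ n2^2 ≤ n1^2 := by
      rcases le_total n1 n2 with h | h
      · exact Or.inl (by nlinarith)
      · exact Or.inr (by nlinarith)
    rcases le_total n1 n2 with h12 | h12
    · obtain ⟨hpos, hbd⟩ := auxB n1 n2 n3 P1 P2 P3 h1 h2 h3 htri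
        hP1l hP1u hP2l hP2u hP3pos hP3u h12
      refine ⟨hpos, ?_⟩
      have hsq12 : n1^2 ≤ n2^2 := by nlinarith [mul_self_le_mul_self h1 h12]
      have ht1 : Real.sqrt (24/25+n1^2) ≤ Real.sqrt P1 := Real.sqrt_le_sqrt hP1l
      have ht2 : Real.sqrt (24/25+n1^2) ≤ Real.sqrt P2 :=
        Real.sqrt_le_sqrt (by linarith)
      have := le_min ht1 ht2
      linarith
    · obtain ⟨hpos, hbd⟩ := auxB n2 n1 n3 P2 P1 P3 h2 h1 h3 (by linarith)
        hP2l hP2u hP1l hP1u hP3pos hP3u h12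
      have e : Real.sqrt P2 + Real.sqrt P1 - Real.sqrt P3
          = Real.sqrt P1 + Real.sqrt P2 - Real.sqrt P3 := by ring
      rw [e] at hpos hbd
      refine ⟨hpos, ?_⟩
      have hsq12 : n2^2 ≤ n1^2 := by nlinarith [mul_self_le_mul_self h2 h12]
      have ht2 : Real.sqrt (24/25+n2^2) ≤ Real.sqrt P2 := Real.sqrt_le_sqrt hP2l
      have ht1 : Real.sqrt (24/25+n2^2) ≤ Real.sqrt P1 :=
        Real.sqrt_le_sqrt (by linarith)
      have := le_min ht1 ht2
      linarith

/-- positivity and inverse bound for the time-resonance phase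
`φ₁₁(ξ,η) = b(ξ)+b(η)−b(ξ+η)` with `b(ζ) = √(1+|ζ|²−ε²|ζ|⁴)`, on the truncated region
`ε²|ξ|⁴, ε²|η|⁴, ε²|ξ+η|⁴ ≤ 16κ₀²`, `κ₀ ≤ 1/200`: `φ₁₁ > 0` and
`1/φ₁₁ ≤ C·min{b(ξ), b(η), b(ξ+η)}` with `C` independent of `ε`. -/
theorem stmt14 :
    ∃ C : ℝ, 0 < C ∧
      ∀ (ε κ₀ : ℝ) (ξ η : EuclideanSpace ℝ (Fin 3)),
        0 < ε → ε ≤ 1 → 0 < κ₀ → κ₀ ≤ 1 / 200 →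
        ε ^ 2 * ‖ξ‖ ^ 4 ≤ 16 * κ₀ ^ 2 → ε ^ 2 * ‖η‖ ^ 4 ≤ 16 * κ₀ ^ 2 →
        ε ^ 2 * ‖ξ + η‖ ^ 4 ≤ 16 * κ₀ ^ 2 →
        0 < Real.sqrt (1 + ‖ξ‖ ^ 2 - ε ^ 2 * ‖ξ‖ ^ 4) +
              Real.sqrt (1 + ‖η‖ ^ 2 - ε ^ 2 * ‖η‖ ^ 4) -
              Real.sqrt (1 + ‖ξ + η‖ ^ 2 - ε ^ 2 * ‖ξ + η‖ ^ 4) ∧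
          1 / (Real.sqrt (1 + ‖ξ‖ ^ 2 - ε ^ 2 * ‖ξ‖ ^ 4) +
                Real.sqrt (1 + ‖η‖ ^ 2 - ε ^ 2 * ‖η‖ ^ 4) -
                Real.sqrt (1 + ‖ξ + η‖ ^ 2 - ε ^ 2 * ‖ξ + η‖ ^ 4))
            ≤ C * min (Real.sqrt (1 + ‖ξ‖ ^ 2 - ε ^ 2 * ‖ξ‖ ^ 4))
                (min (Real.sqrt (1 + ‖η‖ ^ 2 - ε ^ 2 * ‖η‖ ^ 4))
                  (Real.sqrt (1 + ‖ξ + η‖ ^ 2 - ε ^ 2 * ‖ξ + η‖ ^ 4))) := by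
  refine ⟨5, by norm_num, ?_⟩
  intro ε κ₀ ξ η hε hε1 hκ hκ200 hξ hη hξη
  have hκsq : 16 * κ₀^2 ≤ 1/2500 := by nlinarith
  have hb1 : ε^2 * ‖ξ‖^4 ≤ 1/25 := by linarith
  have hb2 : ε^2 * ‖η‖^4 ≤ 1/25 := by linarith
  have hb3 : ε^2 * ‖ξ + η‖^4 ≤ 1/25 := by linarith
  have hp1 : (0:ℝ) ≤ ε^2 * ‖ξ‖^4 := by positivity
  have hp2 : (0:ℝ) ≤ ε^2 * ‖η‖^4 := by positivity
  have hp3 : (0:ℝ) ≤ ε^2 * ‖ξ + η‖^4 := by positivity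
  exact aux ‖ξ‖ ‖η‖ ‖ξ + η‖ _ _ _
    (norm_nonneg _) (norm_nonneg _) (norm_nonneg _) (norm_add_le _ _)
    (by linarith) (by linarith) (by linarith) (by linarith) (by linarith) (by linarith)
end

section
/- Let ε ∈ (0,1], κ₀ ≤ 1/200 and ξ, η ∈ ℝ³ with ε²|ξ|⁴ ≤ 16κ₀² and ε²|η|⁴ ≤ 16κ₀². Then, with b(ζ) = √(1+|ζ|²−ε²|ζ|⁴) and ⟨ζ⟩ = √(1+|ζ|²): |b(η)|ξ|/b(ξ) − |η|| ≤ 1 + b(ξ)b(η) − |ξ||η|. -/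
private lemma key15 (x y Bx By : ℝ) (hx : 0 ≤ x) (hy : 0 ≤ y)
    (h1 : 1 ≤ Bx) (h2 : x ≤ Bx) (h3 : y ≤ By) (h4 : By ≤ 1 + y) :
    |By * x / Bx - y| ≤ 1 + Bx * By - x * y := by
  have hBx : 0 < Bx := lt_of_lt_of_le one_pos h1
  have hd : (By * x / Bx) * Bx = By * x := div_mul_cancel₀ _ (ne_of_gt hBx)
  rw [abs_le]
  constructor
  · nlinarith [mul_nonneg hy (sub_nonneg.2 h2), mul_nonneg (sub_nonneg.2 h3) hx,
      mul_nonneg hy hx, mul_pos hBx hBx]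
  · have hdBy : By * x / Bx ≤ By := by
      rw [div_le_iff₀ hBx]
      nlinarith [mul_nonneg (le_trans hy h3) (sub_nonneg.2 h2)]
    nlinarith [mul_nonneg hy (sub_nonneg.2 h2), mul_nonneg (sub_nonneg.2 h3) hx]

private lemma bfacts (ε κ₀ x : ℝ) (hε : 0 < ε) (hε1 : ε ≤ 1) (hκ : 0 < κ₀)
    (hκ' : κ₀ ≤ 1 / 200) (hx : 0 ≤ x) (h : ε ^ 2 * x ^ 4 ≤ 16 * κ₀ ^ 2) :
    1 ≤ Real.sqrt (1 + x ^ 2 - ε ^ 2 * x ^ 4) ∧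
    x ≤ Real.sqrt (1 + x ^ 2 - ε ^ 2 * x ^ 4) ∧
    Real.sqrt (1 + x ^ 2 - ε ^ 2 * x ^ 4) ≤ 1 + x := by
  have hex : ε * x ^ 2 ≤ 1 := by
    nlinarith [sq_nonneg (ε * x ^ 2), mul_nonneg hε.le (sq_nonneg x)]
  have ha : ε ^ 2 * x ^ 4 ≤ x ^ 2 := by
    nlinarith [mul_nonneg hε.le (sq_nonneg x)]
  refine ⟨Real.one_le_sqrt.2 (by nlinarith), ?_, ?_⟩
  · have := Real.sqrt_le_sqrt (show x ^ 2 ≤ 1 + x ^ 2 - ε ^ 2 * x ^ 4 by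
      nlinarith [sq_nonneg (ε * x ^ 2)])
    calc x = Real.sqrt (x ^ 2) := (Real.sqrt_sq hx).symm
    _ ≤ _ := this
  · have h2 : 1 + x ^ 2 - ε ^ 2 * x ^ 4 ≤ (1 + x) ^ 2 := by
      nlinarith [mul_nonneg (mul_nonneg hε.le hε.le) (pow_nonneg hx 4)]
    calc Real.sqrt (1 + x ^ 2 - ε ^ 2 * x ^ 4) ≤ Real.sqrt ((1 + x) ^ 2) :=
          Real.sqrt_le_sqrt h2
    _ = 1 + x := Real.sqrt_sq (by linarith)

/-- the endpoint (θ = 1) inequality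
`|b(η)|ξ|/b(ξ) − |η|| ≤ 1 + b(ξ)b(η) − |ξ||η|`, with `b(ζ) = √(1+|ζ|²−ε²|ζ|⁴)`, valid on
the region `ε²|ξ|⁴ ≤ 16κ₀²`, `ε²|η|⁴ ≤ 16κ₀²`, `κ₀ ≤ 1/200`, uniformly in `ε ∈ (0,1]`. -/
theorem stmt15 (ε κ₀ : ℝ) (hε : 0 < ε) (hε1 : ε ≤ 1) (hκ : 0 < κ₀) (hκ' : κ₀ ≤ 1 / 200)
    (ξ η : EuclideanSpace ℝ (Fin 3))
    (hξ : ε ^ 2 * ‖ξ‖ ^ 4 ≤ 16 * κ₀ ^ 2) (hη : ε ^ 2 * ‖η‖ ^ 4 ≤ 16 * κ₀ ^ 2) :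
    |Real.sqrt (1 + ‖η‖ ^ 2 - ε ^ 2 * ‖η‖ ^ 4) * ‖ξ‖ /
        Real.sqrt (1 + ‖ξ‖ ^ 2 - ε ^ 2 * ‖ξ‖ ^ 4) - ‖η‖|
      ≤ 1 + Real.sqrt (1 + ‖ξ‖ ^ 2 - ε ^ 2 * ‖ξ‖ ^ 4) *
            Real.sqrt (1 + ‖η‖ ^ 2 - ε ^ 2 * ‖η‖ ^ 4) - ‖ξ‖ * ‖η‖ := by
  obtain ⟨hx1, hx2, -⟩ := bfacts ε κ₀ ‖ξ‖ hε hε1 hκ hκ' (norm_nonneg ξ) hξ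
  obtain ⟨-, hy2, hy3⟩ := bfacts ε κ₀ ‖η‖ hε hε1 hκ hκ' (norm_nonneg η) hη
  exact key15 _ _ _ _ (norm_nonneg ξ) (norm_nonneg η) hx1 hx2 hy2 hy3
end

section
/- Fix C₇, C₈, C₉ > 0, ε ∈ (0,1], s ∈ (0,1/2], a > 1, b > 1+s, and let g : [0,∞) → [0,∞) be C¹ and satisfy g'(t) + C₇ ε g(t)^{1+1/s} ≤ C₉ ε² (1+t)^{−b} for all t ≥ 0, with g(0) ≤ ε². Let β = 1 + 2/s. Then there exists C > 0 depending only on C₇, C₉, s, b (not on ε) such that g(t) ≤ C ε² (1 + ε^β t)^{−s} for all t ≥ 0. -/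
/-!
Comparison with the barrier `φ(t) = K ε² (1 + ε^β t)^{-s}`. Discarding the absorption term and
integrating the forcing gives the a priori bound `g ≤ (1 + C₉/(b-1)) ε²`, which is below `φ` as
long as `ε^β t ≤ 1` once `K ≥ 2^s (1 + C₉/(b-1))`. For `ε^β t ≥ 1` the forcing is dominated,
`(1+t)^{-b} ≤ 2^{s+1} ε^β (1 + ε^β t)^{-(s+1)}` since `b ≥ 1+s` and `ε ≤ 1`, so `φ` is a strict
supersolution as soon as `C₇ K^{1+1/s} > sK + 2^{s+1} C₉`, and `g` can never cross it.
-/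

open Real Filter

lemma eventually_mul_add_lt_mul_rpow {p c : ℝ} (hp : 1 < p) (hc : 0 < c) (A B : ℝ) :
    ∀ᶠ K in atTop, A * K + B < c * K ^ p := by
  have hgrow : ∀ᶠ K : ℝ in atTop, (|A| + |B| + 1) / c ≤ K ^ (p - 1) :=
    (tendsto_rpow_atTop (by linarith)).eventually_ge_atTop _
  filter_upwards [hgrow, eventually_ge_atTop 1] with K hK hK1
  have hKp : K ^ p = K * K ^ (p - 1) := by
    rw [← rpow_one_add' (by positivity) (by linarith), add_sub_cancel]
  have hlin : |A| + |B| + 1 ≤ c * K ^ (p - 1) := by rwa [div_le_iff₀' hc] at hK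
  calc A * K + B < (|A| + |B| + 1) * K := by
        nlinarith [le_abs_self A, le_abs_self B, abs_nonneg B]
    _ ≤ c * K ^ p := by rw [hKp]; nlinarith

lemma rpow_neg_le_mul_rpow_neg {q b E t : ℝ} (hq : 1 ≤ q) (hqb : q ≤ b) (hE : 0 < E) (hE1 : E ≤ 1)
    (hEt : 1 ≤ E * t) : (1 + t) ^ (-b) ≤ 2 ^ q * E * (1 + E * t) ^ (-q) := by
  have ht : 0 ≤ t := by nlinarith
  have hEq : E ^ q ≤ E := by simpa using rpow_le_rpow_of_exponent_ge hE hE1 hq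
  have hpow : (1 + E * t) ^ q ≤ 2 ^ q * E * (1 + t) ^ b := calc
    (1 + E * t) ^ q ≤ (2 * E * (1 + t)) ^ q := by gcongr; nlinarith
    _ = 2 ^ q * E ^ q * (1 + t) ^ q := by
        rw [mul_rpow (by positivity) (by positivity), mul_rpow zero_le_two hE.le]
    _ ≤ 2 ^ q * E * (1 + t) ^ b := by gcongr; linarith
  rw [rpow_neg (by positivity), rpow_neg (by positivity), ← div_eq_mul_inv, inv_eq_one_div,
    div_le_div_iff₀ (by positivity) (by positivity)]
  linarith

lemma le_add_div_of_hasDerivAt_le {g g' : ℝ → ℝ} {A b : ℝ} (hA : 0 ≤ A) (hb : 1 < b)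
    (hg : ∀ t, 0 ≤ t → HasDerivAt g (g' t) t) (hg' : ∀ t, 0 ≤ t → g' t ≤ A * (1 + t) ^ (-b))
    {t : ℝ} (ht : 0 ≤ t) : g t ≤ g 0 + A / (b - 1) := by
  set B : ℝ → ℝ := fun x => g 0 + A / (b - 1) * (1 - (1 + x) ^ (1 - b))
  have hB : ∀ x, 0 ≤ x → HasDerivAt B (A * (1 + x) ^ (-b)) x := by
    intro x hx
    have hb1 : b - 1 ≠ 0 := by linarith
    refine ((((hasDerivAt_id x).const_add 1).rpow_const (Or.inl (by simp; linarith))).const_sub 1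
      |>.const_mul (A / (b - 1)) |>.const_add (g 0)).congr_deriv ?_
    rw [id, show 1 - b - 1 = -b by ring]
    field_simp
    ring
  have hle := image_le_of_deriv_right_le_deriv_boundary (a := 0) (b := t) (f := g) (B := B)
    (fun x hx => (hg x hx.1).continuousAt.continuousWithinAt)
    (fun x hx => (hg x hx.1).hasDerivWithinAt) (by simp [B])
    (fun x hx => (hB x hx.1).continuousAt.continuousWithinAt)
    (fun x hx => (hB x hx.1).hasDerivWithinAt) (fun x hx => hg' x hx.1) ⟨ht, le_rfl⟩
  have : 0 ≤ A / (b - 1) * (1 + t) ^ (1 - b) := by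
    have hb1 : 0 < b - 1 := by linarith
    positivity
  simp only [B] at hle
  linarith

noncomputable def decayBarrier (K ε s t : ℝ) : ℝ := K * ε ^ 2 * (1 + ε ^ (1 + 2 / s) * t) ^ (-s)

section decayBarrier

variable {K ε s t : ℝ}

lemma hasDerivAt_decayBarrier (ht : 0 < 1 + ε ^ (1 + 2 / s) * t) :
    HasDerivAt (decayBarrier K ε s)
      (-(s * K) * ε ^ 2 * ε ^ (1 + 2 / s) * (1 + ε ^ (1 + 2 / s) * t) ^ (-(s + 1))) t := by
  refine ((((hasDerivAt_id t).const_mul _).const_add 1).rpow_const (p := -s) (Or.inl ht.ne')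
    |>.const_mul (K * ε ^ 2)).congr_deriv ?_
  rw [id, show -s - 1 = -(s + 1) by ring]
  ring

lemma mul_rpow_neg_two_le_decayBarrier (hK : 0 ≤ K) (hs : 0 ≤ s) (ht : 0 ≤ ε ^ (1 + 2 / s) * t)
    (ht1 : ε ^ (1 + 2 / s) * t ≤ 1) : K * ε ^ 2 * 2 ^ (-s) ≤ decayBarrier K ε s t := by
  unfold decayBarrier
  exact mul_le_mul_of_nonneg_left
    (rpow_le_rpow_of_nonpos (by linarith) (by linarith) (neg_nonpos.2 hs)) (by positivity)

/-- The exponent `β = 1 + 2/s` is exactly the one making the barrier self-similar: the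
absorption term `ε φ^{1+1/s}` carries the same factor `ε² ε^β (1 + ε^β t)^{-(s+1)}` as `φ'`. -/
lemma mul_decayBarrier_rpow (hε : 0 < ε) (hK : 0 ≤ K) (hs : 0 < s)
    (ht : 0 ≤ 1 + ε ^ (1 + 2 / s) * t) :
    ε * decayBarrier K ε s t ^ (1 + 1 / s) =
      K ^ (1 + 1 / s) * ε ^ 2 * ε ^ (1 + 2 / s) * (1 + ε ^ (1 + 2 / s) * t) ^ (-(s + 1)) := by
  have hsq : (ε ^ 2) ^ (1 + 1 / s) * ε = ε ^ 2 * ε ^ (1 + 2 / s) := by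
    rw [← rpow_natCast, ← rpow_mul hε.le, ← rpow_add_one hε.ne', ← rpow_add hε]
    congr 1
    push_cast
    ring
  have hdecay : ((1 + ε ^ (1 + 2 / s) * t) ^ (-s)) ^ (1 + 1 / s) =
      (1 + ε ^ (1 + 2 / s) * t) ^ (-(s + 1)) := by
    rw [← rpow_mul ht]
    congr 1
    field_simp
  unfold decayBarrier
  rw [mul_rpow (by positivity) (rpow_nonneg ht _), mul_rpow hK (by positivity), hdecay]
  linear_combination K ^ (1 + 1 / s) * (1 + ε ^ (1 + 2 / s) * t) ^ (-(s + 1)) * hsq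

end decayBarrier

lemma le_decayBarrier_of_one_le_mul {g g' : ℝ → ℝ} {C₇ C₉ b K ε s T t : ℝ} (hC₉ : 0 ≤ C₉)
    (hs : 0 < s) (hb : 1 + s ≤ b) (hε : 0 < ε) (hε1 : ε ≤ 1) (hK : 0 ≤ K)
    (hKc : s * K + 2 ^ (s + 1) * C₉ < C₇ * K ^ (1 + 1 / s))
    (hg : ∀ t, 0 ≤ t → HasDerivAt g (g' t) t)
    (hineq : ∀ t, 0 ≤ t → g' t + C₇ * ε * g t ^ (1 + 1 / s) ≤ C₉ * ε ^ 2 * (1 + t) ^ (-b))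
    (hT : 1 ≤ ε ^ (1 + 2 / s) * T) (hgT : g T ≤ decayBarrier K ε s T) (hTt : T ≤ t) :
    g t ≤ decayBarrier K ε s t := by
  set E := ε ^ (1 + 2 / s)
  have hE : 0 < E := by positivity
  have hE1 : E ≤ 1 := rpow_le_one hε.le hε1 (by positivity)
  have hT0 : 0 < T := pos_of_mul_pos_right (by linarith) hE.le
  have hpos : ∀ x, T ≤ x → 0 < 1 + E * x := fun x hx => by nlinarith
  refine image_le_of_deriv_right_lt_deriv_boundary' (a := T) (b := t)
    (fun x hx => (hg x (by linarith [hx.1])).continuousAt.continuousWithinAt)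
    (fun x hx => (hg x (by linarith [hx.1])).hasDerivWithinAt) hgT
    (fun x hx => (hasDerivAt_decayBarrier (hpos x hx.1)).continuousAt.continuousWithinAt)
    (fun x hx => (hasDerivAt_decayBarrier (hpos x hx.1)).hasDerivWithinAt) ?_ ⟨hTt, le_rfl⟩
  rintro x ⟨hTx, -⟩ hgx
  set D := (1 + E * x) ^ (-(s + 1))
  have hD : 0 < ε ^ 2 * E * D := by have := hpos x hTx; positivity
  have habsorb : C₇ * ε * g x ^ (1 + 1 / s) = C₇ * K ^ (1 + 1 / s) * (ε ^ 2 * E * D) := by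
    rw [hgx, mul_assoc, mul_decayBarrier_rpow hε hK hs (hpos x hTx).le]
    ring
  have hforce : C₉ * ε ^ 2 * (1 + x) ^ (-b) ≤ 2 ^ (s + 1) * C₉ * (ε ^ 2 * E * D) := by
    have := rpow_neg_le_mul_rpow_neg (q := s + 1) (b := b) (by linarith) (by linarith) hE hE1
      (hT.trans (by gcongr) : 1 ≤ E * x)
    calc C₉ * ε ^ 2 * (1 + x) ^ (-b) ≤ C₉ * ε ^ 2 * (2 ^ (s + 1) * E * D) := by gcongr
      _ = 2 ^ (s + 1) * C₉ * (ε ^ 2 * E * D) := by ring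
  have := hineq x (by linarith)
  have := mul_lt_mul_of_pos_right hKc hD
  linarith

lemma le_decayBarrier_of_mul_le_one {g g' : ℝ → ℝ} {C₇ C₉ b K ε s t : ℝ} (hC₇ : 0 ≤ C₇)
    (hC₉ : 0 ≤ C₉) (hs : 0 ≤ s) (hb : 1 < b) (hε : 0 ≤ ε) (hK : 2 ^ s * (1 + C₉ / (b - 1)) ≤ K)
    (hg0 : ∀ t, 0 ≤ t → 0 ≤ g t) (hg : ∀ t, 0 ≤ t → HasDerivAt g (g' t) t)
    (hineq : ∀ t, 0 ≤ t → g' t + C₇ * ε * g t ^ (1 + 1 / s) ≤ C₉ * ε ^ 2 * (1 + t) ^ (-b))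
    (hinit : g 0 ≤ ε ^ 2) (ht : 0 ≤ t) (hEt : ε ^ (1 + 2 / s) * t ≤ 1) :
    g t ≤ decayBarrier K ε s t := by
  have hb1 : 0 < b - 1 := by linarith
  have hforce : ∀ x, 0 ≤ x → g' x ≤ C₉ * ε ^ 2 * (1 + x) ^ (-b) := fun x hx => by
    have := mul_nonneg (by positivity : 0 ≤ C₇ * ε) (rpow_nonneg (hg0 x hx) (1 + 1 / s))
    linarith [hineq x hx]
  have hK' : 1 + C₉ / (b - 1) ≤ K * 2 ^ (-s) := by
    rwa [rpow_neg zero_le_two, le_mul_inv_iff₀ (by positivity), mul_comm]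
  calc g t ≤ g 0 + C₉ * ε ^ 2 / (b - 1) :=
        le_add_div_of_hasDerivAt_le (by positivity) hb hg hforce ht
    _ ≤ (1 + C₉ / (b - 1)) * ε ^ 2 := by rw [add_mul, one_mul, div_mul_eq_mul_div]; linarith
    _ ≤ K * 2 ^ (-s) * ε ^ 2 := by gcongr
    _ = K * ε ^ 2 * 2 ^ (-s) := by ring
    _ ≤ decayBarrier K ε s t :=
        mul_rpow_neg_two_le_decayBarrier ((by positivity : 0 ≤ 2 ^ s * (1 + C₉ / (b - 1))).trans hK)
          hs (by positivity) hEt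

theorem stmt18_general (C₇ C₉ : ℝ) (hC₇ : 0 < C₇) (hC₉ : 0 < C₉)
    (s b : ℝ) (hs : 0 < s) (hb : 1 + s < b) :
    ∃ C : ℝ, 0 < C ∧
      ∀ (ε : ℝ) (g g' : ℝ → ℝ),
        0 < ε → ε ≤ 1 →
        (∀ t, 0 ≤ t → 0 ≤ g t) →
        (∀ t, 0 ≤ t → HasDerivAt g (g' t) t) →
        (∀ t, 0 ≤ t → g' t + C₇ * ε * g t ^ (1 + 1 / s) ≤ C₉ * ε ^ 2 * (1 + t) ^ (-b)) →
        g 0 ≤ ε ^ 2 →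
        ∀ t, 0 ≤ t → g t ≤ C * ε ^ 2 * (1 + ε ^ (1 + 2 / s) * t) ^ (-s) := by
  have hb1 : 0 < b - 1 := by linarith
  obtain ⟨K, hKM, hKc⟩ := ((eventually_ge_atTop (2 ^ s * (1 + C₉ / (b - 1)))).and
    (eventually_mul_add_lt_mul_rpow (lt_add_of_pos_right 1 (one_div_pos.2 hs)) hC₇ s
      (2 ^ (s + 1) * C₉))).exists
  have hK : 0 < K := lt_of_lt_of_le (by positivity) hKM
  refine ⟨K, hK, fun ε g g' hε hε1 hg0 hg hineq hinit t ht => ?_⟩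
  have hearly {t : ℝ} : 0 ≤ t → ε ^ (1 + 2 / s) * t ≤ 1 → g t ≤ decayBarrier K ε s t :=
    le_decayBarrier_of_mul_le_one hC₇.le hC₉.le hs.le (by linarith) hε.le hKM hg0 hg hineq hinit
  rcases le_total (ε ^ (1 + 2 / s) * t) 1 with hEt | hEt
  · exact hearly ht hEt
  · have hE : 0 < ε ^ (1 + 2 / s) := by positivity
    have hT : ε ^ (1 + 2 / s) * (1 / ε ^ (1 + 2 / s)) = 1 := mul_one_div_cancel hE.ne'
    exact le_decayBarrier_of_one_le_mul hC₉.le hs hb.le hε hε1 hK.le hKc hg hineq hT.ge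
      (hearly (by positivity) hT.le) ((div_le_iff₀' hE).2 hEt)

/-- Grönwall-type decay lemma: if `g ≥ 0` is `C¹` on `[0,∞)` with
`g' + C₇ ε g^{1+1/s} ≤ C₉ ε²(1+t)^{−b}` and `g(0) ≤ ε²`, where `s ∈ (0,1/2]`, `a > 1`,
`b > 1+s`, then `g(t) ≤ C ε²(1+ε^β t)^{−s}` with `β = 1+2/s` and `C` depending only on
`C₇, C₉, s, b` (in particular not on `ε ∈ (0,1]`). -/
theorem stmt18 (C₇ C₈ C₉ : ℝ) (hC₇ : 0 < C₇) (hC₈ : 0 < C₈) (hC₉ : 0 < C₉)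
    (s a b : ℝ) (hs : 0 < s) (hs' : s ≤ 1 / 2) (ha : 1 < a) (hb : 1 + s < b) :
    ∃ C : ℝ, 0 < C ∧
      ∀ (ε : ℝ) (g g' : ℝ → ℝ),
        0 < ε → ε ≤ 1 →
        (∀ t, 0 ≤ t → 0 ≤ g t) →
        (∀ t, 0 ≤ t → HasDerivAt g (g' t) t) →
        (∀ t, 0 ≤ t → g' t + C₇ * ε * g t ^ (1 + 1 / s) ≤ C₉ * ε ^ 2 * (1 + t) ^ (-b)) →
        g 0 ≤ ε ^ 2 →
        ∀ t, 0 ≤ t → g t ≤ C * ε ^ 2 * (1 + ε ^ (1 + 2 / s) * t) ^ (-s) :=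
  stmt18_general C₇ C₉ hC₇ hC₉ s b hs hb
end
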